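/- arXiv:1812.09424 — 2 statements merged into one kernel-verified Lean document; each statement's English description precedes it below -/
import Mathlib

section
/- Let E, F be symmetric positive definite p×p matrices, N₁, N₂ > 0, N* = N₁+N₂, ρⱼ = Nⱼ/N*, and μ* = ρ₁ N₁ λ_max(E⁻¹) + ρ₂ N₂ λ_max(F⁻¹). Then the maximum axis length D' of the alternative ellipsoid {z : (z−b)ᵀ (E+F) (z−b) ≤ N* d²/μ*} satisfies D' ≤ 2d. -/
open Matrix

lemma quad_le_sup_eig {p : ℕ} (A : Matrix (Fin p) (Fin p) ℝ) (hA : A.IsHermitian)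
    (v : Fin p → ℝ) :
    v ⬝ᵥ A *ᵥ v ≤ (⨆ i, hA.eigenvalues i) * (v ⬝ᵥ v) := by
  classical
  set U : Matrix (Fin p) (Fin p) ℝ := (hA.eigenvectorUnitary : Matrix (Fin p) (Fin p) ℝ) with hU
  set w : Fin p → ℝ := star U *ᵥ v with hw
  have hUt : Uᵀ = star U := by
    rw [star_eq_conjTranspose, conjTranspose_eq_transpose_of_trivial]
  have hdot : ∀ x : Fin p → ℝ, v ⬝ᵥ U *ᵥ x = w ⬝ᵥ x := by
    intro x
    rw [dotProduct_mulVec, ← mulVec_transpose, hUt, hw]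
  have hvv : v ⬝ᵥ v = w ⬝ᵥ w := by
    have h1 : U * star U = 1 := mem_unitaryGroup_iff.mp hA.eigenvectorUnitary.2
    calc v ⬝ᵥ v = v ⬝ᵥ (U * star U) *ᵥ v := by rw [h1, one_mulVec]
    _ = w ⬝ᵥ w := by rw [← mulVec_mulVec, hdot]
  have key : v ⬝ᵥ A *ᵥ v = ∑ i, hA.eigenvalues i * (w i)^2 := by
    conv_lhs => rw [hA.spectral_theorem, Unitary.conjStarAlgAut_apply]
    rw [← mulVec_mulVec, ← mulVec_mulVec, hdot]
    simp only [dotProduct, mulVec_diagonal, Function.comp_apply, RCLike.ofReal_real_eq_id, id]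
    exact Finset.sum_congr rfl fun i _ => by ring
  have hsum : ∑ i, hA.eigenvalues i * (w i)^2 ≤ (⨆ i, hA.eigenvalues i) * ∑ i, (w i)^2 := by
    rw [Finset.mul_sum]
    apply Finset.sum_le_sum
    intro i _
    exact mul_le_mul_of_nonneg_right (le_ciSup (Set.finite_range _).bddAbove i) (sq_nonneg _)
  have hww : w ⬝ᵥ w = ∑ i, (w i)^2 := by simp [dotProduct, sq]
  rw [key, hvv, hww]
  exact hsum

lemma normsq_le_supinv_mul_quad {p : ℕ} {E : Matrix (Fin p) (Fin p) ℝ}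
    (hE : E.IsHermitian) (hEpd : E.PosDef) (v : Fin p → ℝ) :
    v ⬝ᵥ v ≤ (⨆ i, hE.inv.eigenvalues i) * (v ⬝ᵥ E *ᵥ v) := by
  classical
  rcases eq_or_ne v 0 with rfl | hv
  · simp
  have hEinv : (E⁻¹).PosDef := hEpd.inv
  have hEu : IsUnit E.det := isUnit_iff_ne_zero.mpr hEpd.det_pos.ne'
  set u : Fin p → ℝ := E⁻¹ *ᵥ v with hu
  set s : ℝ := v ⬝ᵥ E⁻¹ *ᵥ v with hs
  set q : ℝ := v ⬝ᵥ E *ᵥ v with hq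
  set nv : ℝ := v ⬝ᵥ v with hnv
  have hspos : 0 < s := by simpa using hEinv.dotProduct_mulVec_pos hv
  have hqpos : 0 < q := by simpa using hEpd.dotProduct_mulVec_pos hv
  -- E *ᵥ u = v
  have hEuv : E *ᵥ u = v := by
    rw [hu, mulVec_mulVec, mul_nonsing_inv E hEu, one_mulVec]
  -- symmetry facts
  have hsym : ∀ x y : Fin p → ℝ, x ⬝ᵥ E *ᵥ y = y ⬝ᵥ E *ᵥ x := by
    intro x y
    rw [dotProduct_mulVec, ← mulVec_transpose, dotProduct_comm]
    congr 1
    rw [show Eᵀ = E from by rw [← conjTranspose_eq_transpose_of_trivial, hE.eq]]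
  have h1 : u ⬝ᵥ E *ᵥ v = nv := by rw [hsym, hEuv, hnv]
  have h2 : u ⬝ᵥ E *ᵥ u = s := by rw [hsym, hEuv, hs, hu, dotProduct_comm]
  -- w = s • v - nv • u
  set w : Fin p → ℝ := s • v - nv • u with hww
  have hwnn : 0 ≤ w ⬝ᵥ E *ᵥ w := by simpa using hEpd.posSemidef.dotProduct_mulVec_nonneg w
  have hexp : w ⬝ᵥ E *ᵥ w = s^2 * q - s * nv^2 := by
    rw [hww]
    simp only [sub_dotProduct, dotProduct_sub, mulVec_sub, mulVec_smul, smul_dotProduct,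
      dotProduct_smul, smul_eq_mul]
    rw [h1, h2]
    have h3 : v ⬝ᵥ E *ᵥ u = nv := by rw [hsym]; exact h1
    rw [h3, ← hq]
    ring
  have hCS : nv^2 ≤ q * s := by nlinarith [hwnn, hexp, hspos]
  -- s ≤ a * nv
  have hsa : s ≤ (⨆ i, hE.inv.eigenvalues i) * nv := quad_le_sup_eig _ hE.inv v
  have hnvpos : 0 < nv := by
    obtain ⟨i, hi⟩ := Function.ne_iff.mp hv
    have : nv = ∑ j, (v j)^2 := by simp [hnv, dotProduct, sq]
    rw [this]
    exact Finset.sum_pos' (fun j _ => sq_nonneg _) ⟨i, Finset.mem_univ i, by simp only [Pi.zero_apply] at hi; exact pow_pos (abs_pos.mpr hi) 2 |> fun h => by rwa [← sq_abs]⟩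
  nlinarith [hCS, hsa, hnvpos, hqpos]

lemma ellipsoid_arith (a c N₁ N₂ d μ qE qF nv : ℝ) (ha : 0 < a) (hc : 0 < c)
    (hN₁ : 0 < N₁) (hN₂ : 0 < N₂) (hμ : 0 < μ) (hnv : 0 ≤ nv) (hqE : 0 ≤ qE) (hqF : 0 ≤ qF)
    (h1 : nv ≤ a * qE) (h2 : nv ≤ c * qF)
    (hμeq : μ * (N₁ + N₂) = N₁^2 * a + N₂^2 * c)
    (h3 : μ * (qE + qF) ≤ (N₁ + N₂) * d^2) : nv ≤ d^2 := by
  have hab : (a + c) * nv ≤ a * c * (qE + qF) := by nlinarith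
  have h4 : μ * ((a + c) * nv) ≤ a * c * ((N₁ + N₂) * d^2) :=
    calc μ * ((a + c) * nv) ≤ μ * (a * c * (qE + qF)) :=
          mul_le_mul_of_nonneg_left hab hμ.le
    _ = a * c * (μ * (qE + qF)) := by ring
    _ ≤ a * c * ((N₁ + N₂) * d^2) := mul_le_mul_of_nonneg_left h3 (by positivity)
  have h5 : (N₁ + N₂)^2 * (a * c) * nv ≤ (μ * (N₁ + N₂)) * ((a + c) * nv) := by
    rw [hμeq]
    nlinarith [mul_nonneg (sq_nonneg (N₁ * a - N₂ * c)) hnv]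
  have h6 : (N₁ + N₂) * (μ * ((a + c) * nv)) ≤ (N₁ + N₂) * (a * c * ((N₁ + N₂) * d^2)) :=
    mul_le_mul_of_nonneg_left h4 (by positivity)
  have h7 : (N₁ + N₂)^2 * (a * c) * nv ≤ (N₁ + N₂)^2 * (a * c) * d^2 := by nlinarith
  have hpos : 0 < (N₁ + N₂)^2 * (a * c) := by positivity
  exact le_of_mul_le_mul_left (by linarith [h7]) hpos


/-- Maximum axis of the alternative confidence ellipsoid
`{z : (z−b)ᵀ (E+F) (z−b) ≤ N* d²/μ*}` is at most `2d`, where `N* = N₁+N₂`,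
`ρⱼ = Nⱼ/N*` and `μ* = ρ₁ N₁ λ_max(E⁻¹) + ρ₂ N₂ λ_max(F⁻¹)`. -/
theorem alternative_ellipsoid_max_axis {p : ℕ} (hp : 0 < p)
    (E F : Matrix (Fin p) (Fin p) ℝ)
    (hE : E.IsHermitian) (hF : F.IsHermitian) (hEpd : E.PosDef) (hFpd : F.PosDef)
    (b : Fin p → ℝ) (N₁ N₂ d : ℝ) (hN₁ : 0 < N₁) (hN₂ : 0 < N₂) (hd : 0 < d)
    (Nstar ρ₁ ρ₂ μstar : ℝ)
    (hNstar : Nstar = N₁ + N₂) (hρ₁ : ρ₁ = N₁ / Nstar) (hρ₂ : ρ₂ = N₂ / Nstar)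
    (hμstar : μstar = ρ₁ * N₁ * (⨆ i, hE.inv.eigenvalues i)
      + ρ₂ * N₂ * (⨆ i, hF.inv.eigenvalues i)) :
    ∀ z₁ z₂ : Fin p → ℝ,
      (z₁ - b) ⬝ᵥ (E + F) *ᵥ (z₁ - b) ≤ Nstar * d ^ 2 / μstar →
      (z₂ - b) ⬝ᵥ (E + F) *ᵥ (z₂ - b) ≤ Nstar * d ^ 2 / μstar →
      Real.sqrt (∑ i, (z₁ i - z₂ i) ^ 2) ≤ 2 * d := by
  classical
  intro z₁ z₂ h₁ h₂
  set a : ℝ := ⨆ i, hE.inv.eigenvalues i with hadef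
  set c : ℝ := ⨆ i, hF.inv.eigenvalues i with hcdef
  have i0 : Fin p := ⟨0, hp⟩
  have ha : 0 < a := lt_of_lt_of_le (hEpd.inv.eigenvalues_pos i0)
    (le_ciSup (Set.finite_range _).bddAbove i0)
  have hc : 0 < c := lt_of_lt_of_le (hFpd.inv.eigenvalues_pos i0)
    (le_ciSup (Set.finite_range _).bddAbove i0)
  have hNs : 0 < Nstar := by rw [hNstar]; linarith
  have hμpos : 0 < μstar := by
    rw [hμstar, hρ₁, hρ₂]
    positivity
  have hμeq : μstar * (N₁ + N₂) = N₁^2 * a + N₂^2 * c := by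
    rw [hμstar, hρ₁, hρ₂, hNstar]
    field_simp
  -- key bound : each point within distance d of b
  have key : ∀ z : Fin p → ℝ,
      (z - b) ⬝ᵥ (E + F) *ᵥ (z - b) ≤ Nstar * d ^ 2 / μstar →
      ∑ i, (z i - b i) ^ 2 ≤ d ^ 2 := by
    intro z hz
    set v : Fin p → ℝ := z - b with hv
    have hsplit : v ⬝ᵥ (E + F) *ᵥ v = v ⬝ᵥ E *ᵥ v + v ⬝ᵥ F *ᵥ v := by
      rw [add_mulVec, dotProduct_add]
    have hnveq : v ⬝ᵥ v = ∑ i, (z i - b i) ^ 2 := by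
      simp [dotProduct, hv, sq]
    have h3 : μstar * (v ⬝ᵥ E *ᵥ v + v ⬝ᵥ F *ᵥ v) ≤ (N₁ + N₂) * d ^ 2 := by
      rw [← hsplit, ← hNstar]
      calc μstar * (v ⬝ᵥ (E + F) *ᵥ v) ≤ μstar * (Nstar * d ^ 2 / μstar) :=
            mul_le_mul_of_nonneg_left hz hμpos.le
      _ = Nstar * d ^ 2 := by field_simp
    have hqE : 0 ≤ v ⬝ᵥ E *ᵥ v := by simpa using hEpd.posSemidef.dotProduct_mulVec_nonneg v
    have hqF : 0 ≤ v ⬝ᵥ F *ᵥ v := by simpa using hFpd.posSemidef.dotProduct_mulVec_nonneg v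
    have h1 : v ⬝ᵥ v ≤ a * (v ⬝ᵥ E *ᵥ v) := normsq_le_supinv_mul_quad hE hEpd v
    have h2 : v ⬝ᵥ v ≤ c * (v ⬝ᵥ F *ᵥ v) := normsq_le_supinv_mul_quad hF hFpd v
    have hnvnn : 0 ≤ v ⬝ᵥ v := by rw [hnveq]; positivity
    rw [← hnveq]
    exact ellipsoid_arith a c N₁ N₂ d μstar _ _ _ ha hc hN₁ hN₂ hμpos hnvnn hqE hqF h1 h2 hμeq h3
  have k₁ := key z₁ h₁
  have k₂ := key z₂ h₂
  -- Euclidean triangle inequality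
  set X : EuclideanSpace ℝ (Fin p) := (WithLp.equiv 2 (Fin p → ℝ)).symm (z₁ - b) with hX
  set Y : EuclideanSpace ℝ (Fin p) := (WithLp.equiv 2 (Fin p → ℝ)).symm (z₂ - b) with hY
  have hXY : Real.sqrt (∑ i, (z₁ i - z₂ i) ^ 2) = ‖X - Y‖ := by
    rw [EuclideanSpace.norm_eq]
    congr 1
    apply Finset.sum_congr rfl
    intro i _
    rw [Real.norm_eq_abs, sq_abs]
    congr 1
    simp [hX, hY]
  have hXn : ‖X‖ ≤ d := by
    rw [EuclideanSpace.norm_eq]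
    have : ∑ i, ‖X i‖ ^ 2 = ∑ i, (z₁ i - b i) ^ 2 := by
      apply Finset.sum_congr rfl
      intro i _
      rw [Real.norm_eq_abs, sq_abs]
      simp [hX]
    rw [this]
    calc Real.sqrt (∑ i, (z₁ i - b i) ^ 2) ≤ Real.sqrt (d ^ 2) := Real.sqrt_le_sqrt k₁
    _ = d := Real.sqrt_sq hd.le
  have hYn : ‖Y‖ ≤ d := by
    rw [EuclideanSpace.norm_eq]
    have : ∑ i, ‖Y i‖ ^ 2 = ∑ i, (z₂ i - b i) ^ 2 := by
      apply Finset.sum_congr rfl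
      intro i _
      rw [Real.norm_eq_abs, sq_abs]
      simp [hY]
    rw [this]
    calc Real.sqrt (∑ i, (z₂ i - b i) ^ 2) ≤ Real.sqrt (d ^ 2) := Real.sqrt_le_sqrt k₂
    _ = d := Real.sqrt_sq hd.le
  calc Real.sqrt (∑ i, (z₁ i - z₂ i) ^ 2) = ‖X - Y‖ := hXY
  _ ≤ ‖X‖ + ‖Y‖ := norm_sub_le X Y
  _ ≤ d + d := add_le_add hXn hYn
  _ = 2 * d := by ring
end

section
/- Let A₁,…,A_M be symmetric positive definite p×p matrices, N₁,…,N_M > 0, N* = ∑ Nⱼ, ρⱼ = Nⱼ/N*. Suppose for each j that (1/Nⱼ)Aⱼ → Σ for a common positive definite matrix Σ (as a limit over a directed family). Then (∑ⱼ ρⱼ²/Nⱼ)⁻¹ · ∑ⱼ ρⱼ² Aⱼ⁻¹ − N* (∑ⱼ Aⱼ)⁻¹ → 0. -/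
/-!
Write `Bⱼ = Nⱼ⁻¹ Aⱼ → Σ`. Since `ρⱼ² Aⱼ⁻¹ = (ρⱼ²/Nⱼ) Bⱼ⁻¹`, the first term is a convex
combination of the `Bⱼ⁻¹` (weights proportional to `ρⱼ²/Nⱼ`), and `N* (∑ Aⱼ)⁻¹` is the
inverse of the convex combination of the `Bⱼ` with weights `ρⱼ`. Convex combinations of
finitely many sequences with a common limit converge to that limit, and matrix inversion is
continuous at the invertible `Σ`, so both terms tend to `Σ⁻¹`.
-/

open Matrix Filter Topology

theorem Matrix.inv_smul₀ {n K : Type*} [Fintype n] [DecidableEq n] [Field K] {c : K}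
    (hc : c ≠ 0) (A : Matrix n n K) : (c • A)⁻¹ = c⁻¹ • A⁻¹ := by
  by_cases hA : IsUnit A.det
  · exact inv_smul' _ (Units.mk0 c hc) hA
  · have hcA : ¬IsUnit (c • A).det := by
      rwa [det_smul, IsUnit.mul_iff, and_iff_right ((Ne.isUnit hc).pow _)]
    rw [nonsing_inv_apply_not_isUnit _ hA, nonsing_inv_apply_not_isUnit _ hcA, smul_zero]

theorem Filter.Tendsto.matrix_inv {α n K : Type*} [Fintype n] [DecidableEq n] [Field K]
    [TopologicalSpace K] [IsTopologicalRing K] [ContinuousInv₀ K] {l : Filter α}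
    {f : α → Matrix n n K} {S : Matrix n n K} (hf : Tendsto f l (𝓝 S)) (hS : S.det ≠ 0) :
    Tendsto (fun a => (f a)⁻¹) l (𝓝 S⁻¹) :=
  (continuousAt_matrix_inv S (by rw [Ring.inverse_eq_inv']; exact continuousAt_inv₀ hS)).tendsto.comp
    hf

theorem tendsto_inv_sum_smul_sum_smul {α ι E : Type*} [Fintype ι] [NormedAddCommGroup E]
    [NormedSpace ℝ E] {l : Filter α} {w : α → ι → ℝ} {f : ι → α → E} {L : E}
    (hw : ∀ a j, 0 ≤ w a j) (hsum : ∀ a, 0 < ∑ j, w a j)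
    (hf : ∀ j, Tendsto (f j) l (𝓝 L)) :
    Tendsto (fun a => (∑ j, w a j)⁻¹ • ∑ j, w a j • f j a) l (𝓝 L) := by
  set u : α → ι → ℝ := fun a j => (∑ i, w a i)⁻¹ * w a j
  have hu_le : ∀ a j, ‖u a j‖ ≤ 1 := fun a j => by
    rw [Real.norm_of_nonneg (mul_nonneg (inv_nonneg.2 (hsum a).le) (hw a j)),
      inv_mul_le_one₀ (hsum a)]
    exact Finset.single_le_sum (fun i _ => hw a i) (Finset.mem_univ j)
  have hu_sum : ∀ a, ∑ j, u a j = 1 := fun a => by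
    rw [← Finset.mul_sum, inv_mul_cancel₀ (hsum a).ne']
  have hdev : Tendsto (fun a => ∑ j, u a j • (f j a - L)) l (𝓝 0) := by
    simpa using tendsto_finsetSum Finset.univ fun j _ =>
      (isBoundedUnder_of ⟨1, fun a => hu_le a j⟩).smul_tendsto_zero
        (tendsto_sub_nhds_zero_iff.2 (hf j))
  refine (by simpa using hdev.const_add L : Tendsto _ l (𝓝 L)).congr fun a => ?_
  simp only [smul_sub, Finset.sum_sub_distrib, ← Finset.sum_smul, hu_sum, one_smul,
    add_sub_cancel, Finset.smul_sum, smul_smul, u]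

theorem alternative_confidence_matrix_approx_general {p M : ℕ} (hM : 0 < M)
    (A : ℕ → Fin M → Matrix (Fin p) (Fin p) ℝ)
    (N : ℕ → Fin M → ℝ) (hN : ∀ k j, 0 < N k j)
    (Sig : Matrix (Fin p) (Fin p) ℝ) (hSig : Sig.PosDef)
    (hconv : ∀ j, Tendsto (fun k => (N k j)⁻¹ • A k j) atTop (nhds Sig)) :
    Tendsto
      (fun k =>
        (∑ j, (N k j / ∑ i, N k i) ^ 2 / N k j)⁻¹ •
            (∑ j, (N k j / ∑ i, N k i) ^ 2 • (A k j)⁻¹) -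
          (∑ i, N k i) • (∑ j, A k j)⁻¹)
      atTop (nhds 0) := by
  -- any norm inducing the entrywise topology will do
  let _ : NormedAddCommGroup (Matrix (Fin p) (Fin p) ℝ) := Matrix.normedAddCommGroup
  let _ : NormedSpace ℝ (Matrix (Fin p) (Fin p) ℝ) := Matrix.normedSpace
  have : Nonempty (Fin M) := ⟨⟨0, hM⟩⟩
  have hdet : Sig.det ≠ 0 := hSig.det_pos.ne'
  have hNsum : ∀ k, 0 < ∑ i, N k i := fun k =>
    Finset.sum_pos (fun i _ => hN k i) Finset.univ_nonempty
  have hw : ∀ k j, 0 < (N k j / ∑ i, N k i) ^ 2 / N k j := fun k j =>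
    div_pos (pow_pos (div_pos (hN k j) (hNsum k)) 2) (hN k j)
  have h₁ : Tendsto (fun k => (∑ j, (N k j / ∑ i, N k i) ^ 2 / N k j)⁻¹ •
      ∑ j, (N k j / ∑ i, N k i) ^ 2 • (A k j)⁻¹) atTop (𝓝 Sig⁻¹) := by
    refine (tendsto_inv_sum_smul_sum_smul (fun k j => (hw k j).le)
      (fun k => Finset.sum_pos (fun j _ => hw k j) Finset.univ_nonempty)
      (fun j => (hconv j).matrix_inv hdet)).congr fun k => congrArg _ ?_
    refine Finset.sum_congr rfl fun j _ => ?_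
    rw [inv_smul₀ (inv_ne_zero (hN k j).ne'), inv_inv, smul_smul,
      div_mul_cancel₀ _ (hN k j).ne']
  have h₂ : Tendsto (fun k => (∑ i, N k i) • (∑ j, A k j)⁻¹) atTop (𝓝 Sig⁻¹) := by
    refine ((tendsto_inv_sum_smul_sum_smul (fun k j => (hN k j).le) hNsum hconv).matrix_inv
      hdet).congr fun k => ?_
    rw [inv_smul₀ (inv_ne_zero (hNsum k).ne'), inv_inv]
    congr 2
    exact Finset.sum_congr rfl fun j _ => smul_inv_smul₀ (hN k j).ne' _
  simpa using h₁.sub h₂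

/-- If `(1/Nⱼ) Aⱼ → Σ` (positive definite) with `Nⱼ → ∞`, `N* = ∑ Nⱼ`,
`ρⱼ = Nⱼ/N*`, then `(∑ⱼ ρⱼ²/Nⱼ)⁻¹ ∑ⱼ ρⱼ² Aⱼ⁻¹ − N* (∑ⱼ Aⱼ)⁻¹ → 0`. -/
theorem alternative_confidence_matrix_approx {p M : ℕ} (hp : 0 < p) (hM : 0 < M)
    (A : ℕ → Fin M → Matrix (Fin p) (Fin p) ℝ)
    (N : ℕ → Fin M → ℝ) (hN : ∀ k j, 0 < N k j)
    (hApd : ∀ k j, (A k j).PosDef)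
    (Sig : Matrix (Fin p) (Fin p) ℝ) (hSig : Sig.PosDef)
    (hconv : ∀ j, Tendsto (fun k => (N k j)⁻¹ • A k j) atTop (nhds Sig))
    (hNinf : ∀ j, Tendsto (fun k => N k j) atTop atTop) :
    Tendsto
      (fun k =>
        (∑ j, (N k j / ∑ i, N k i) ^ 2 / N k j)⁻¹ •
            (∑ j, (N k j / ∑ i, N k i) ^ 2 • (A k j)⁻¹) -
          (∑ i, N k i) • (∑ j, A k j)⁻¹)
      atTop (nhds 0) :=
  alternative_confidence_matrix_approx_general hM A N hN Sig hSig hconv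
end
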